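/- Let α be a nonzero real algebraic number of degree m and L the Liouville constant. Then α·L is a Liouville-type approximable number of degree m: there exist infinitely many algebraic numbers γ of degree m such that for every w > 0, all but finitely many of these γ satisfy 0 < |αL - γ| < H(γ)^{-w}. Equivalently, w*_m(αL) = ∞. -/

import Mathlib

open Polynomial Filter

/-- Primitive integer minimal polynomial of a real number. -/
noncomputable def intMin (x : ℝ) : Polynomial ℤ :=
  (IsLocalization.integerNormalization (nonZeroDivisors ℤ) (minpoly ℚ x)).primPart

/-- Height of an integer polynomial: max absolute value of its coefficients. -/
def polyHeight (P : Polynomial ℤ) : ℕ :=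
  (Finset.range (P.natDegree + 1)).sup fun i => (P.coeff i).natAbs

/-- Height of an algebraic real number. -/
noncomputable def aheight (x : ℝ) : ℕ := polyHeight (intMin x)

/-- Degree of a real number over ℚ. -/
noncomputable def adeg (x : ℝ) : ℕ := (minpoly ℚ x).natDegree

/-- Liouville constant L = ∑ 10^{-j!}, j ≥ 1. -/
noncomputable def Lconst : ℝ := ∑' j : ℕ, 1 / (10 : ℝ) ^ (Nat.factorial (j + 1))

/-- Numerator of k-th truncation of L. -/
def pk (k : ℕ) : ℤ := ∑ j ∈ Finset.range k, 10 ^ ((Nat.factorial k) - (Nat.factorial (j + 1)))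

/-- Denominator of k-th truncation of L. -/
def qk (k : ℕ) : ℤ := 10 ^ (Nat.factorial k)

/-- Set of degree-n algebraic approximants witnessing exponent w. -/
noncomputable def wSet (ξ : ℝ) (n : ℕ) (w : ℝ) : Set ℝ :=
  {γ : ℝ | IsAlgebraic ℚ γ ∧ adeg γ = n ∧ 0 < |ξ - γ| ∧
    |ξ - γ| < (aheight γ : ℝ) ^ (-w - 1)}

/-- ξ is a U_m-number: w*_m(ξ) = ∞ and w*_n(ξ) < ∞ for 1 ≤ n < m. -/
noncomputable def IsUm (ξ : ℝ) (m : ℕ) : Prop :=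
  (∀ w : ℝ, (wSet ξ m w).Infinite) ∧
    ∀ n : ℕ, 1 ≤ n → n < m → ∃ w : ℝ, (wSet ξ n w).Finite

/-- ξ is a Liouville number. -/
def IsLiouvilleNum (x : ℝ) : Prop :=
  ∀ w : ℝ, 0 < w →
    {r : ℚ | 0 < |x - (r : ℝ)| ∧ |x - (r : ℝ)| < (r.den : ℝ) ^ (-w)}.Infinite

/-- Height of a rational number: max of |numerator| and denominator. -/
def qheight (r : ℚ) : ℕ := max r.num.natAbs r.den

/-!
The approximants are `γ_k = (p_k / q_k) α`, where `p_k / q_k` is the `k`-th partial sum of `L`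
and `q_k = 10 ^ k!`. Multiplying by a nonzero rational preserves the degree `m`, and rescaling the
minimal polynomial of `α` gives `H(γ_k) ≤ H(α) q_k ^ m`. On the other hand
`|α L - γ_k| = |α| (L - p_k / q_k) < |α| q_k ^ (-k)`, and since `k` eventually exceeds any fixed
multiple of `m`, this beats `H(γ_k) ^ (-w - 1)` for every `w`.
-/

lemma natAbs_coeff_le_polyHeight (P : ℤ[X]) (i : ℕ) : (P.coeff i).natAbs ≤ polyHeight P := by
  by_cases h : i ≤ P.natDegree
  · exact Finset.le_sup (f := fun i => (P.coeff i).natAbs) (Finset.mem_range_succ_iff.2 h)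
  · simp [coeff_eq_zero_of_natDegree_lt (not_le.1 h)]

lemma polyHeight_le {P : ℤ[X]} {H : ℕ} (h : ∀ i, (P.coeff i).natAbs ≤ H) : polyHeight P ≤ H :=
  Finset.sup_le fun i _ => h i

lemma one_le_polyHeight {P : ℤ[X]} (hP : P ≠ 0) : 1 ≤ polyHeight P :=
  (Int.natAbs_pos.2 (leadingCoeff_ne_zero.2 hP)).trans_le (natAbs_coeff_le_polyHeight P _)

section IntMin

variable {x : ℝ}

lemma intMin_ne_zero : intMin x ≠ 0 := primPart_ne_zero _

lemma one_le_aheight : 1 ≤ aheight x := one_le_polyHeight intMin_ne_zero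

lemma map_intMin_associated (hx : IsAlgebraic ℚ x) :
    Associated ((intMin x).map (Int.castRingHom ℚ)) (minpoly ℚ x) := by
  set N := IsLocalization.integerNormalization (nonZeroDivisors ℤ) (minpoly ℚ x)
  obtain ⟨b, hb, hN⟩ := IsLocalization.integerNormalization_spec (nonZeroDivisors ℤ) (minpoly ℚ x)
  have hN0 : N ≠ 0 := by
    rw [Ne, IsFractionRing.integerNormalization_eq_zero_iff]
    exact minpoly.ne_zero hx.isIntegral
  have hc : IsUnit (C (N.content : ℚ)) :=
    isUnit_C.2 (Ne.isUnit (by exact_mod_cast mt content_eq_zero_iff.1 hN0))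
  have hb : IsUnit (C (b : ℚ)) :=
    isUnit_C.2 (Ne.isUnit (by exact_mod_cast nonZeroDivisors.ne_zero hb))
  have hmap : C (N.content : ℚ) * (intMin x).map (Int.castRingHom ℚ)
      = C (b : ℚ) * minpoly ℚ x :=
    calc _ = N.map (algebraMap ℤ ℚ) := by
          conv_rhs => rw [N.eq_C_content_mul_primPart]
          simp [intMin, N, Polynomial.map_mul]
      _ = _ := by rw [hN, ← Int.cast_smul_eq_zsmul ℚ, smul_eq_C_mul]
  rw [← associated_isUnit_mul_left_iff hc, hmap]
  exact associated_unit_mul_left _ _ hb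

lemma natDegree_intMin (hx : IsAlgebraic ℚ x) : (intMin x).natDegree = adeg x := by
  rw [adeg, ← natDegree_eq_of_degree_eq (degree_eq_degree_of_associated (map_intMin_associated hx)),
    natDegree_map_eq_of_injective (RingHom.injective_int _)]

lemma intMin_dvd_of_aeval_eq_zero (hx : IsAlgebraic ℚ x) {B : ℤ[X]} (hB : aeval x B = 0) :
    intMin x ∣ B := by
  refine (IsPrimitive.Int.dvd_iff_map_cast_dvd_map_cast _ _ (isPrimitive_primPart _)).2 ?_
  refine (map_intMin_associated hx).dvd.trans (minpoly.dvd ℚ x ?_)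
  rwa [← algebraMap_int_eq, aeval_map_algebraMap]

lemma aeval_intMin (hx : IsAlgebraic ℚ x) : aeval x (intMin x) = 0 := by
  obtain ⟨u, hu⟩ := (map_intMin_associated hx).symm
  rw [← aeval_map_algebraMap ℚ, algebraMap_int_eq, ← hu, map_mul, minpoly.aeval, zero_mul]

lemma aheight_le_polyHeight (hx : IsAlgebraic ℚ x) {B : ℤ[X]} (hB0 : B ≠ 0)
    (hdeg : B.natDegree = adeg x) (hB : aeval x B = 0) : aheight x ≤ polyHeight B := by
  obtain ⟨K, rfl⟩ := intMin_dvd_of_aeval_eq_zero hx hB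
  have hK0 : K ≠ 0 := right_ne_zero_of_mul hB0
  have hK : K.natDegree = 0 := by
    rw [natDegree_mul intMin_ne_zero hK0, natDegree_intMin hx] at hdeg
    omega
  rw [eq_C_of_natDegree_eq_zero hK] at hK0 ⊢
  have hk : K.coeff 0 ≠ 0 := by simpa using hK0
  refine polyHeight_le fun i => ?_
  calc ((intMin x).coeff i).natAbs
      ≤ ((intMin x).coeff i * K.coeff 0).natAbs := by
        rw [Int.natAbs_mul]; exact Nat.le_mul_of_pos_right _ (Int.natAbs_pos.2 hk)
    _ ≤ polyHeight (intMin x * C (K.coeff 0)) := by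
        rw [← coeff_mul_C]; exact natAbs_coeff_le_polyHeight _ _

lemma adeg_ratCast_mul {c : ℚ} (hc : c ≠ 0) (hx : IsAlgebraic ℚ x) : adeg (c * x) = adeg x := by
  rw [adeg, ← Rat.smul_def, IsIntegrallyClosed.minpoly_smul hc hx.isIntegral, natDegree_scaleRoots,
    adeg]

lemma aheight_intCast_div_mul_le {p q : ℤ} (hp : p ≠ 0) (hpq : p.natAbs ≤ q.natAbs)
    (hx : IsAlgebraic ℚ x) : aheight (p / q * x) ≤ aheight x * q.natAbs ^ adeg x := by
  have hq : q ≠ 0 := by rintro rfl; exact hp (Int.natAbs_eq_zero.1 (Nat.le_zero.1 hpq))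
  have hγ : (p / q * x : ℝ) = ((p / q : ℚ) : ℝ) * x := by push_cast; rfl
  have hdeg : adeg (p / q * x) = adeg x := by
    rw [hγ, adeg_ratCast_mul (div_ne_zero (by exact_mod_cast hp) (by exact_mod_cast hq)) hx]
  -- `B(y) = p ^ m A(q y / p)` with `A = intMin x`, so `B(p x / q) = 0`
  set B := ((intMin x).scaleRoots p).comp (C q * X)
  have hB0 : B ≠ 0 := by
    rw [Ne, comp_C_mul_X_eq_zero_iff (mem_nonZeroDivisors_of_ne_zero hq)]
    exact scaleRoots_ne_zero intMin_ne_zero p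
  have hBdeg : B.natDegree = adeg (p / q * x) := by
    rw [natDegree_comp, natDegree_C_mul_X q hq, natDegree_scaleRoots, natDegree_intMin hx, hdeg,
      mul_one]
  have hB : aeval (p / q * x : ℝ) B = 0 := by
    have : (q : ℝ) * (p / q * x) = algebraMap ℤ ℝ p * x := by
      rw [eq_intCast]
      field_simp [show (q : ℝ) ≠ 0 by exact_mod_cast hq]
    rw [aeval_comp, map_mul, aeval_C, aeval_X, algebraMap_int_eq, eq_intCast, this]
    exact scaleRoots_aeval_eq_zero (aeval_intMin hx)
  refine (aheight_le_polyHeight (hγ ▸ (isAlgebraic_algebraMap _).mul hx) hB0 hBdeg hB).trans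
    (polyHeight_le fun i => ?_)
  rw [comp_C_mul_X_coeff, coeff_scaleRoots, natDegree_intMin hx]
  by_cases hi : i ≤ adeg x
  · calc ((intMin x).coeff i * p ^ (adeg x - i) * q ^ i).natAbs
        = ((intMin x).coeff i).natAbs * p.natAbs ^ (adeg x - i) * q.natAbs ^ i := by
          simp only [Int.natAbs_mul, Int.natAbs_pow]
      _ ≤ aheight x * q.natAbs ^ (adeg x - i) * q.natAbs ^ i := by
          gcongr
          exact natAbs_coeff_le_polyHeight _ _
      _ = aheight x * q.natAbs ^ adeg x := by rw [mul_assoc, ← pow_add, Nat.sub_add_cancel hi]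
  · rw [coeff_eq_zero_of_natDegree_lt (by rw [natDegree_intMin hx]; omega)]
    simp

end IntMin

section LiouvilleConstant

open LiouvilleNumber Nat

lemma pk_div_qk (k : ℕ) :
    (pk k : ℝ) / qk k = ∑ j ∈ Finset.range k, 1 / (10 : ℝ) ^ (j + 1)! := by
  simp only [pk, qk, Int.cast_sum, Int.cast_pow, Int.cast_ofNat, Finset.sum_div]
  refine Finset.sum_congr rfl fun j hj => ?_
  rw [div_eq_div_iff (by positivity) (by positivity), one_mul, ← pow_add,
    Nat.sub_add_cancel (Nat.factorial_le (Finset.mem_range.1 hj))]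

lemma Lconst_eq_add_remainder (k : ℕ) : Lconst = (pk k : ℝ) / qk k + remainder 10 k := by
  rw [pk_div_qk, Lconst, ← (summable_one_div_pow_of_le (by norm_num)
    fun j => (j.le_succ.trans (j + 1).self_le_factorial)).sum_add_tsum_nat_add k]
  -- the tail terms differ only by `i + k + 1 = i + (k + 1)`, which holds definitionally
  rfl

lemma strictMono_pk_div_qk : StrictMono fun k => (pk k : ℝ) / qk k :=
  strictMono_nat_of_lt_succ fun k => by
    rw [pk_div_qk, pk_div_qk, Finset.sum_range_succ]
    exact lt_add_of_pos_right _ (by positivity)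

lemma Lconst_lt_one : Lconst < 1 := by
  have h := remainder_lt' 0 (by norm_num : (1 : ℝ) < 10)
  rw [Lconst_eq_add_remainder 0]
  norm_num [pk, qk] at h ⊢
  linarith

lemma pk_le_qk (k : ℕ) : pk k ≤ qk k := by
  have hq : (0 : ℝ) < qk k := by simp [qk]
  have : (pk k : ℝ) / qk k < 1 :=
    ((lt_add_of_pos_right _ (remainder_pos (by norm_num) k)).trans_eq
      (Lconst_eq_add_remainder k).symm).trans Lconst_lt_one
  exact_mod_cast ((div_lt_one hq).1 this).le

lemma pk_pos {k : ℕ} (hk : 1 ≤ k) : 0 < pk k :=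
  Finset.sum_pos (fun _ _ => by positivity) ⟨0, Finset.mem_range.2 hk⟩

end LiouvilleConstant

open Nat in
lemma eventually_mul_remainder_lt_rpow {a : ℝ} (ha : 0 ≤ a) (C : ℝ) (m : ℕ) (w : ℝ) :
    ∀ᶠ k in atTop, ∀ H : ℝ, 1 ≤ H → H ≤ C * ((10 : ℝ) ^ k !) ^ m →
      a * LiouvilleNumber.remainder 10 k < H ^ (-w - 1) := by
  set S := ⌈w + 1⌉₊
  obtain ⟨N, hN⟩ := pow_unbounded_of_one_lt (a * C ^ S) (by norm_num : (1 : ℝ) < 10)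
  filter_upwards [eventually_ge_atTop (N + m * S)] with k hk H hH1 hHC
  set q : ℝ := 10 ^ (k !)
  have hq : 10 ≤ q := le_self_pow₀ (by norm_num) (factorial_ne_zero k)
  have hCq : 0 < C * q ^ m := by linarith
  have key : a * (C * q ^ m) ^ S < q ^ k :=
    calc a * (C * q ^ m) ^ S = a * C ^ S * q ^ (m * S) := by ring
      _ < 10 ^ N * q ^ (m * S) := by gcongr
      _ ≤ q ^ N * q ^ (m * S) := by gcongr
      _ ≤ q ^ k := by rw [← pow_add]; exact pow_le_pow_right₀ (by linarith) hk
  calc a * LiouvilleNumber.remainder 10 k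
      ≤ a * (1 / q ^ k) := by
        gcongr
        exact (LiouvilleNumber.remainder_lt k (by norm_num)).le
    _ < 1 / (C * q ^ m) ^ S := by
        rw [mul_one_div, div_lt_div_iff₀ (by positivity) (by positivity), one_mul]
        exact key
    _ ≤ 1 / H ^ S := by gcongr
    _ = H ^ (-(S : ℝ)) := by rw [Real.rpow_neg (by linarith), Real.rpow_natCast, one_div]
    _ ≤ H ^ (-w - 1) := Real.rpow_le_rpow_of_exponent_le hH1 (by linarith [Nat.le_ceil (w + 1)])

open Nat in
lemma pk_div_qk_mul_mem_wSet {α w : ℝ} (hα0 : α ≠ 0) (hα : IsAlgebraic ℚ α) {k : ℕ} (hk : 1 ≤ k)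
    (hrem : ∀ H : ℝ, 1 ≤ H → H ≤ aheight α * ((10 : ℝ) ^ k !) ^ adeg α →
      |α| * LiouvilleNumber.remainder 10 k < H ^ (-w - 1)) :
    (pk k : ℝ) / qk k * α ∈ wSet (α * Lconst) (adeg α) w := by
  have hp := pk_pos hk
  have hq : 0 < qk k := by simp [qk]
  have hrat : (pk k / qk k : ℝ) = ((pk k / qk k : ℚ) : ℝ) := by push_cast; rfl
  have hdist : |α * Lconst - pk k / qk k * α| = |α| * LiouvilleNumber.remainder 10 k := by
    rw [Lconst_eq_add_remainder k, show ∀ a r : ℝ, α * (a + r) - a * α = α * r by intros; ring,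
      abs_mul, abs_of_pos (LiouvilleNumber.remainder_pos (by norm_num) k)]
  have hheight : (aheight (pk k / qk k * α) : ℝ) ≤ aheight α * ((10 : ℝ) ^ k !) ^ adeg α := by
    have hpq : (pk k).natAbs ≤ (qk k).natAbs := by have := pk_le_qk k; omega
    have h := aheight_intCast_div_mul_le hp.ne' hpq hα
    rw [show (qk k).natAbs = 10 ^ (k !) by simp [qk]] at h
    exact_mod_cast h
  refine ⟨hrat ▸ (isAlgebraic_algebraMap _).mul hα, ?_, ?_, ?_⟩
  · rw [hrat, adeg_ratCast_mul (div_ne_zero (by exact_mod_cast hp.ne') (by exact_mod_cast hq.ne'))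
      hα]
  · rw [hdist]
    exact mul_pos (abs_pos.2 hα0) (LiouvilleNumber.remainder_pos (by norm_num) k)
  · rw [hdist]
    exact hrem _ (by exact_mod_cast one_le_aheight) hheight

theorem stmt11 (α : ℝ) (hα0 : α ≠ 0) (hα : IsAlgebraic ℚ α) (m : ℕ)
    (hm : adeg α = m) :
    ∀ w : ℝ, (wSet (α * Lconst) m w).Infinite := by
  intro w
  subst hm
  have hmem : ∀ᶠ k in atTop, (pk k : ℝ) / qk k * α ∈ wSet (α * Lconst) (adeg α) w := by
    filter_upwards [eventually_ge_atTop 1,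
      eventually_mul_remainder_lt_rpow (abs_nonneg α) (aheight α) (adeg α) w] with k hk hrem
    exact pk_div_qk_mul_mem_wSet hα0 hα hk hrem
  have hinj : Function.Injective fun k => (pk k : ℝ) / qk k * α :=
    fun _ _ h => strictMono_pk_div_qk.injective (mul_right_cancel₀ hα0 h)
  exact ((Nat.frequently_atTop_iff_infinite.1 hmem.frequently).image hinj.injOn).mono
    (Set.image_subset_iff.2 fun _ hk => hk)
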